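/- arXiv:1711.02592 — 2 statements merged into one kernel-verified Lean document; each statement's English description precedes it below -/
import Mathlib

section
/- The fundamental theorem of symmetric polynomials in the multivariable (vector-valued) setting: for every finite-dimensional k-vector space T (char k = 0), the k-algebra homomorphism ⊗_{i=1}^n Sym(Sym^i T) → (Sym(T^n))^{S_n}, sending the i-th elementary 'symmetric tensor' generators to the corresponding invariants, is surjective. Equivalently, the invariant ring (Sym(T^n))^{S_n} is generated as a k-algebra by the subspaces Sym^{[1^i]}T (polarized elementary symmetric functions) for i = 1,…,n. -/
open MvPolynomial

/-- The polarized elementary symmetric function of degree `i` attached to a covector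
`c : Fin d → k`: writing `L_j = ∑_l c_l X_{j,l}` for the corresponding linear form in
the `j`-th group of variables, it is `∑_{j₁ < ⋯ < j_i} L_{j₁} ⋯ L_{j_i}`.
Since `char k = 0`, these elements span the subspaces `Sym^{[1^i]}T` of the invariant
ring (`Sym^i T` is spanned by `i`-th powers of vectors). -/
noncomputable def polarizedEsymm (k : Type*) [Field k] (n d : ℕ) (i : ℕ)
    (c : Fin d → k) : MvPolynomial (Fin n × Fin d) k :=
  ∑ s ∈ Finset.univ.powersetCard i,
    ∏ j ∈ s, (∑ l : Fin d, MvPolynomial.C (c l) * MvPolynomial.X (j, l))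

/-- The subalgebra of `Sym(T^n) = k[X_{j,l}]` of invariants under the symmetric
group `S_n` permuting the `n` groups of variables. -/
noncomputable def snInvariants (k : Type*) [Field k] (n d : ℕ) :
    Subalgebra k (MvPolynomial (Fin n × Fin d) k) where
  carrier := {p | ∀ σ : Equiv.Perm (Fin n),
    MvPolynomial.rename (Prod.map σ id) p = p}
  mul_mem' := fun hp hq σ => by rw [map_mul, hp σ, hq σ]
  add_mem' := fun hp hq σ => by rw [map_add, hp σ, hq σ]
  algebraMap_mem' := fun r σ => by
    rw [MvPolynomial.algebraMap_eq, MvPolynomial.rename_C]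

/-!
Averaging over `S_n` (possible since `n!` is invertible) shows that the invariants are spanned
by the orbit sums of monomials, and the orbit sum of `∏_j x_j^{β_j}` (`x_j` the `j`-th block of
variables) is a sum over injective placements `e` of `∏_m x_{e m}^{β_m}`. Multiplying a placement
sum of length `r` by the polarized power sum `P_γ = ∑_j x_j^γ`, the new factor lands either in a
free block or on an occupied one; this expresses placement sums of length `r + 1` through `P_γ`
and placement sums of length `r`. Finally, for a linear form `L = ∑_l c_l x_l`, the power sum
`∑_j L(x_j)^i` is a polynomial in the elementary symmetric functions of the `L(x_j)`, i.e. in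
polarized elementary symmetric functions; as a polynomial in `c` its coefficient of `c^γ` is
`multinomial(γ) • P_γ`, and over an infinite field each coefficient of such a family lies in
the algebra too.
-/

open Finset

theorem Submodule.mem_of_forall_sum_smul_mem {k M ι : Type*} [Field k] [Infinite k]
    [AddCommGroup M] [Module k M] [Fintype ι] (V : Submodule k M) (s : Finset (ι → ℕ))
    (v : (ι → ℕ) → M) (h : ∀ c : ι → k, ∑ α ∈ s, (∏ l, c l ^ α l) • v α ∈ V)
    {α : ι → ℕ} (hα : α ∈ s) : v α ∈ V := by
  classical
  by_contra hv
  obtain ⟨φ, hφα, hφV⟩ := V.exists_dual_map_eq_bot_of_notMem hv inferInstance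
  have hφ : ∀ x ∈ V, φ x = 0 := fun x hx =>
    (Submodule.mem_bot k).1 (hφV ▸ Submodule.mem_map_of_mem hx)
  -- `φ` turns the family into a polynomial function of `c` that vanishes identically
  let p : MvPolynomial ι k := ∑ β ∈ s, monomial (Finsupp.equivFunOnFinite.symm β) (φ (v β))
  have hp : p = 0 := MvPolynomial.funext fun c => by
    simpa [p, eval_monomial, Finsupp.prod_fintype, mul_comm] using hφ _ (h c)
  apply hφα
  simpa [p, coeff_sum, coeff_monomial, hα] using
    congrArg (coeff (Finsupp.equivFunOnFinite.symm α)) hp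

theorem MvPolynomial.IsSymmetric.mem_adjoin_esymm {σ R : Type*} [CommRing R] [Fintype σ]
    {p : MvPolynomial σ R} (hp : p.IsSymmetric) :
    p ∈ Algebra.adjoin R (Set.range fun i : Fin (Fintype.card σ) => esymm σ R (i + 1)) := by
  obtain ⟨q, hq⟩ := esymmAlgHom_surjective R le_rfl ⟨p, hp⟩
  rw [Algebra.adjoin_range_eq_range_aeval]
  exact ⟨q, by simpa [esymmAlgHom_apply] using congrArg Subtype.val hq⟩

section Multisymmetric

variable {k : Type*} [Field k] {n d : ℕ}

variable (n) in
noncomputable def blockLinearForm (c : Fin d → k) (j : Fin n) : MvPolynomial (Fin n × Fin d) k :=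
  ∑ l, C (c l) * X (j, l)

variable (k) in
noncomputable def blockMonomial (β : Fin d → ℕ) (j : Fin n) : MvPolynomial (Fin n × Fin d) k :=
  ∏ l, X (j, l) ^ β l

variable (k n) in
noncomputable def polarizedPsum (β : Fin d → ℕ) : MvPolynomial (Fin n × Fin d) k :=
  ∑ j, blockMonomial k β j

variable (k n) in
noncomputable def placementSum {r : ℕ} (g : Fin r → Fin d → ℕ) :
    MvPolynomial (Fin n × Fin d) k :=
  ∑ e : Fin r ↪ Fin n, ∏ m, blockMonomial k (g m) (e m)

variable (k n d) in
noncomputable def polarizedEsymmAlgebra : Subalgebra k (MvPolynomial (Fin n × Fin d) k) :=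
  Algebra.adjoin k {p | ∃ i ∈ Icc 1 n, ∃ c : Fin d → k, p = polarizedEsymm k n d i c}

theorem aeval_blockLinearForm_esymm (i : ℕ) (c : Fin d → k) :
    aeval (blockLinearForm n c) (esymm (Fin n) k i) = polarizedEsymm k n d i c := by
  rw [aeval_esymm_eq_multiset_esymm, Finset.esymm_map_val]
  rfl

theorem polarizedEsymm_mem_snInvariants (i : ℕ) (c : Fin d → k) :
    polarizedEsymm k n d i c ∈ snInvariants k n d := fun σ => by
  have hL : ∀ j, rename (Prod.map σ id) (blockLinearForm n c j) = blockLinearForm n c (σ j) := by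
    simp [blockLinearForm]
  rw [← aeval_blockLinearForm_esymm, ← AlgHom.comp_apply, comp_aeval, funext hL]
  conv_rhs => rw [← esymm_isSymmetric (Fin n) k i σ, aeval_rename]
  rfl

theorem sum_blockLinearForm_pow_mem (i : ℕ) (c : Fin d → k) :
    ∑ j, blockLinearForm n c j ^ i ∈ polarizedEsymmAlgebra k n d := by
  have h : aeval (blockLinearForm n c) (psum (Fin n) k i) ∈
      (Algebra.adjoin k _).map (aeval (blockLinearForm n c)) :=
    Subalgebra.mem_map.2 ⟨_, (psum_isSymmetric (Fin n) k i).mem_adjoin_esymm, rfl⟩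
  rw [← Algebra.adjoin_image] at h
  simp only [psum, map_sum, map_pow, aeval_X] at h
  refine Algebra.adjoin_mono ?_ h
  rintro _ ⟨_, ⟨i, rfl⟩, rfl⟩
  exact ⟨i + 1, mem_Icc.2 ⟨by omega, by simpa using i.isLt⟩, c,
    aeval_blockLinearForm_esymm _ c⟩

theorem blockLinearForm_pow (i : ℕ) (c : Fin d → k) (j : Fin n) :
    blockLinearForm n c j ^ i = ∑ α ∈ piAntidiag univ i,
      (∏ l, c l ^ α l) • (Nat.multinomial univ α • blockMonomial k α j) := by
  rw [blockLinearForm, sum_pow_eq_sum_piAntidiag]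
  refine sum_congr rfl fun α _ => ?_
  simp only [mul_pow, prod_mul_distrib, ← map_pow, ← map_prod, blockMonomial, smul_eq_C_mul,
    nsmul_eq_mul]
  ring

theorem polarizedPsum_mem [CharZero k] (β : Fin d → ℕ) :
    polarizedPsum k n β ∈ polarizedEsymmAlgebra k n d := by
  have h := (Subalgebra.toSubmodule (polarizedEsymmAlgebra k n d)).mem_of_forall_sum_smul_mem
    (piAntidiag univ (∑ l, β l)) (fun α => Nat.multinomial univ α • polarizedPsum k n α)
    (fun c => by
      have hc := sum_blockLinearForm_pow_mem (n := n) (∑ l, β l) c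
      simp only [blockLinearForm_pow] at hc
      rw [sum_comm] at hc
      simpa [polarizedPsum, smul_sum] using hc)
    (mem_piAntidiag.2 ⟨rfl, fun l _ => mem_univ l⟩)
  rw [← Nat.cast_smul_eq_nsmul k] at h
  exact (Submodule.smul_mem_iff _ (Nat.cast_ne_zero.2 (Nat.multinomial_pos _ _).ne')).1 h

theorem blockMonomial_add (β γ : Fin d → ℕ) (j : Fin n) :
    blockMonomial k (β + γ) j = blockMonomial k β j * blockMonomial k γ j := by
  simp only [blockMonomial, Pi.add_apply, pow_add, prod_mul_distrib]

theorem blockMonomial_mul_prod_blockMonomial {r : ℕ} (β : Fin d → ℕ) (g : Fin r → Fin d → ℕ)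
    (e : Fin r → Fin n) (m : Fin r) :
    blockMonomial k β (e m) * ∏ m', blockMonomial k (g m') (e m') =
      ∏ m', blockMonomial k (Function.update g m (β + g m) m') (e m') := by
  rw [Fintype.prod_eq_mul_prod_compl m, Fintype.prod_eq_mul_prod_compl m, Function.update_self,
    blockMonomial_add, mul_assoc]
  congr 2
  refine prod_congr rfl fun m' hm' => ?_
  rw [Function.update_of_ne (by simpa using hm')]

theorem polarizedPsum_mul_prod_blockMonomial {r : ℕ} (β : Fin d → ℕ) (g : Fin r → Fin d → ℕ)
    (e : Fin r ↪ Fin n) :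
    polarizedPsum k n β * ∏ m, blockMonomial k (g m) (e m) =
      ∑ j ∈ (univ.map e)ᶜ, blockMonomial k β j * ∏ m, blockMonomial k (g m) (e m) +
        ∑ m, ∏ m', blockMonomial k (Function.update g m (β + g m) m') (e m') := by
  rw [polarizedPsum, sum_mul, ← sum_compl_add_sum (univ.map e), sum_map]
  simp only [blockMonomial_mul_prod_blockMonomial]

theorem polarizedPsum_mul_placementSum {r : ℕ} (β : Fin d → ℕ) (g : Fin r → Fin d → ℕ) :
    polarizedPsum k n β * placementSum k n g = placementSum k n (Fin.cons β g) +
      ∑ m, placementSum k n (Function.update g m (β + g m)) := by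
  have hcons : placementSum k n (Fin.cons β g) = ∑ e : Fin r ↪ Fin n,
      ∑ j ∈ (univ.map e)ᶜ, blockMonomial k β j * ∏ m, blockMonomial k (g m) (e m) := by
    rw [placementSum, ← (Equiv.embeddingFinSucc r (Fin n)).symm.sum_comp, Fintype.sum_sigma]
    refine sum_congr rfl fun e _ => ?_
    rw [sum_subtype (F := inferInstance) (univ.map e)ᶜ (p := (· ∉ Set.range e)) (by simp)]
    simp [Fin.prod_univ_succ]
  rw [hcons]
  simp only [placementSum, mul_sum, polarizedPsum_mul_prod_blockMonomial, sum_add_distrib,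
    sum_comm (γ := Fin r)]

theorem placementSum_mem [CharZero k] {r : ℕ} (g : Fin r → Fin d → ℕ) :
    placementSum k n g ∈ polarizedEsymmAlgebra k n d := by
  induction r with
  | zero => simp [placementSum]
  | succ r ih =>
    rw [← Fin.cons_self_tail g, eq_sub_of_add_eq (polarizedPsum_mul_placementSum _ _).symm]
    exact sub_mem (mul_mem (polarizedPsum_mem _) (ih _)) (sum_mem fun m _ => ih _)

theorem rename_perm_monomial (σ : Equiv.Perm (Fin n)) (μ : Fin n × Fin d →₀ ℕ) (a : k) :
    rename (Prod.map σ id) (monomial μ a) =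
      C a * ∏ j, blockMonomial k (fun l => μ (j, l)) (σ j) := by
  simp only [monomial_eq, Finsupp.prod_fintype _ _ (fun _ => pow_zero _), map_mul, rename_C,
    map_prod, map_pow, rename_X, Fintype.prod_prod_type, blockMonomial, Prod.map_apply, id]

theorem sum_rename_perm_monomial_mem [CharZero k] (μ : Fin n × Fin d →₀ ℕ) (a : k) :
    ∑ σ : Equiv.Perm (Fin n), rename (Prod.map σ id) (monomial μ a) ∈
      polarizedEsymmAlgebra k n d := by
  simp only [rename_perm_monomial, ← mul_sum]
  refine mul_mem (Subalgebra.algebraMap_mem _ a) ?_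
  rw [← (Equiv.embeddingEquivOfFinite (Fin n)).sum_comp]
  exact placementSum_mem fun j l => μ (j, l)

theorem snInvariants_le_polarizedEsymmAlgebra [CharZero k] :
    snInvariants k n d ≤ polarizedEsymmAlgebra k n d := fun p hp => by
  have hsum : ∑ σ : Equiv.Perm (Fin n), rename (Prod.map σ id) p = (n.factorial : k) • p := by
    rw [sum_congr rfl fun σ _ => hp σ, sum_const, card_univ, Fintype.card_perm,
      Fintype.card_fin, Nat.cast_smul_eq_nsmul]
  have hmem : (n.factorial : k) • p ∈ polarizedEsymmAlgebra k n d := by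
    rw [← hsum, ← p.support_sum_monomial_coeff]
    simp only [map_sum]
    rw [sum_comm]
    exact sum_mem fun μ _ => sum_rename_perm_monomial_mem μ _
  exact (Submodule.smul_mem_iff (Subalgebra.toSubmodule (polarizedEsymmAlgebra k n d))
    (Nat.cast_ne_zero.2 n.factorial_ne_zero)).1 hmem

end Multisymmetric

/-- Fundamental theorem of vector-valued symmetric functions: in characteristic
zero, the invariant ring `(Sym(T^n))^{S_n}` is generated as a `k`-algebra by the
polarized elementary symmetric functions of degrees `1, …, n`; equivalently the
algebra homomorphism `⊗_{i=1}^n Sym(Sym^i T) → (Sym(T^n))^{S_n}` is surjective. -/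
theorem stmt_3 (k : Type*) [Field k] [CharZero k] (n d : ℕ) :
    Algebra.adjoin k
      {p : MvPolynomial (Fin n × Fin d) k |
        ∃ i ∈ Finset.Icc 1 n, ∃ c : Fin d → k, p = polarizedEsymm k n d i c} =
    (snInvariants k n d) := by
  refine le_antisymm ?_ snInvariants_le_polarizedEsymmAlgebra
  rw [Algebra.adjoin_le_iff]
  rintro _ ⟨i, -, c, rfl⟩
  exact polarizedEsymm_mem_snInvariants i c
end

section
/- The projection p_n(V) : Cayley_n(V) → Chow_n(V) is a finite morphism, and it is étale (finite étale of degree n) over the open subset Chow'_n(V) of multiplicity-free 0-cycles. -/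
open MvPolynomial

/-- The coordinate ring of (the base change to `V^n` of) the universal spectral cover
`Cayley_n(V) ⊂ Chow_n(V) × V`: functions on `V^n × V` modulo the ideal generated by
the universal Cayley–Hamilton relations `f_t(v, v₁, …, v_n) = ∏ⱼ (t(v) − t(vⱼ))`,
`t` ranging over all linear forms on `V`. -/
noncomputable def cayleyRing (k : Type*) [Field k] (n d : ℕ) : Type _ :=
  MvPolynomial ((Fin n × Fin d) ⊕ Fin d) k ⧸
    Ideal.span {f : MvPolynomial ((Fin n × Fin d) ⊕ Fin d) k | ∃ c : Fin d → k,
      f = ∏ j : Fin n, (∑ l : Fin d, C (c l) * X (Sum.inr l) -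
        ∑ l : Fin d, C (c l) * X (Sum.inl (j, l)))}

noncomputable instance (k : Type*) [Field k] (n d : ℕ) :
    CommRing (cayleyRing k n d) :=
  inferInstanceAs (CommRing (_ ⧸ _))

/-- The structural ring map `k[Chow_n(V)] → k[Cayley_n(V) ×_{Chow_n(V)} V^n]`. -/
noncomputable def cayleyStructMap (k : Type*) [Field k] (n d : ℕ) :
    (snInvariants k n d) →+* cayleyRing k n d :=
  (Ideal.Quotient.mk _).comp
    ((MvPolynomial.rename Sum.inl).toRingHom.comp (snInvariants k n d).val.toRingHom)

/-!
Over `k[V^n]^{S_n}` each coordinate `x_{j,l}` is a root of the monic polynomial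
`∏_j (T - x_{j,l})`, whose coefficients are symmetric, and by the Cayley relation for the
coordinate form `t = e_l` so is the coordinate `y_l` on `V`; the Cayley ring is generated by
these integral elements, hence finite.

For the fibre over distinct points `v_j`, pick a linear form `t₀` separating them. Then
`L = t₀(y)` satisfies `∏_j (L - t₀(v_j)) = 0`, so the Lagrange basis evaluated at `L` gives
idempotents `e_j` with `∑ e_j = 1` and `e_j L = t₀(v_j) e_j`. The relation for `t₀ + s t` holds
for every `s ∈ k`, hence, `k` being infinite, as a polynomial identity in `s`; differentiating it
at `s = 0` and multiplying by `e_j` yields `e_j t(y) = t(v_j) e_j` for every `t`, so evaluation at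
the points `v_j` is an isomorphism onto `k^n`.
-/

namespace Polynomial

theorem eq_zero_of_forall_eval_algebraMap_eq_zero {k R : Type*} [Field k] [Infinite k]
    [CommRing R] [Algebra k R] {p : R[X]} (h : ∀ s : k, p.eval (algebraMap k R s) = 0) :
    p = 0 := by
  ext m
  refine (Module.forall_dual_apply_eq_zero_iff k (p.coeff m)).mp fun φ => ?_
  let q : k[X] := ∑ i ∈ p.support, monomial i (φ (p.coeff i))
  have hq : q = 0 := Polynomial.funext fun s => by
    have := congrArg φ (h s)
    simp only [eval_eq_sum, Polynomial.sum_def, map_sum, ← map_pow, mul_comm (p.coeff _),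
      ← Algebra.smul_def, map_smul, smul_eq_mul, map_zero] at this
    simpa [q, eval_finsetSum, mul_comm] using this
  by_cases hm : p.coeff m = 0
  · simp [hm]
  · simpa [q, finsetSum_coeff, coeff_monomial, hm] using congrArg (coeff · m) hq

open Finset in
theorem _root_.Finset.sum_mul_prod_erase_eq_zero_of_forall_prod_add_smul_eq_zero {k R ι : Type*}
    [Field k] [Infinite k] [CommRing R] [Algebra k R] [Fintype ι] [DecidableEq ι] {u w : ι → R}
    (h : ∀ s : k, ∏ i, (u i + s • w i) = 0) :
    ∑ i, w i * ∏ i' ∈ univ.erase i, u i' = 0 := by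
  have hp : ∏ i, (C (u i) + C (w i) * X) = 0 :=
    eq_zero_of_forall_eval_algebraMap_eq_zero fun s => by
      simpa only [eval_prod, eval_add, eval_mul, eval_C, eval_X, Algebra.smul_def, mul_comm]
        using h s
  have := congrArg (fun p => eval 0 (derivative p)) hp
  simp only [derivative_prod_finset, eval_finsetSum, eval_mul, eval_prod, eval_add, eval_C,
    eval_X, derivative_add, derivative_C, derivative_mul, derivative_X, mul_zero, add_zero,
    zero_mul, zero_add, mul_one, derivative_zero, eval_zero] at this
  simpa only [mul_comm] using this

end Polynomial

section LagrangeIdempotent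

open Polynomial Finset

variable {k R ι : Type*} [Field k] [CommRing R] [Algebra k R]

theorem Lagrange.aeval_nodal (s : Finset ι) (a : ι → k) (L : R) :
    aeval L (Lagrange.nodal s a) = ∏ i ∈ s, (L - algebraMap k R (a i)) := by
  simp [Lagrange.nodal, map_prod]

variable [Fintype ι] [DecidableEq ι]

noncomputable def lagrangeIdempotent (a : ι → k) (L : R) (j : ι) : R :=
  aeval L (Lagrange.basis univ a j)

variable {a : ι → k} {L : R}

theorem lagrangeIdempotent_mul_aeval (hL : ∏ i, (L - algebraMap k R (a i)) = 0) (j : ι)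
    (p : k[X]) :
    lagrangeIdempotent a L j * aeval L p = p.eval (a j) • lagrangeIdempotent a L j := by
  have hbasis : Lagrange.basis univ a j * (Polynomial.X - Polynomial.C (a j)) =
      Polynomial.C (Lagrange.nodalWeight univ a j) * Lagrange.nodal univ a := by
    rw [Lagrange.basis_eq_prod_sub_inv_mul_nodal_div (mem_univ j),
      ← Lagrange.nodal_erase_eq_nodal_div (mem_univ j),
      Lagrange.nodal_eq_mul_nodal_erase (mem_univ j)]
    ring
  obtain ⟨q, hq⟩ := X_sub_C_dvd_sub_C_eval (a := a j) (p := p)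
  have : lagrangeIdempotent a L j * aeval L (p - Polynomial.C (p.eval (a j))) = 0 := by
    rw [lagrangeIdempotent, ← map_mul, hq, ← mul_assoc, hbasis, mul_assoc, map_mul, map_mul,
      Lagrange.aeval_nodal, hL, zero_mul, mul_zero]
  rw [map_sub, Polynomial.aeval_C, mul_sub, sub_eq_zero] at this
  rw [this, Algebra.smul_def, mul_comm]

theorem sum_lagrangeIdempotent (ha : Function.Injective a)
    (hL : ∏ i, (L - algebraMap k R (a i)) = 0) : ∑ j, lagrangeIdempotent a L j = 1 := by
  cases isEmpty_or_nonempty ι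
  · exact (subsingleton_of_zero_eq_one (by simpa using hL.symm)).elim _ _
  · simp only [lagrangeIdempotent]
    rw [← map_sum, Lagrange.sum_basis ha.injOn univ_nonempty, map_one]

end LagrangeIdempotent

section SpectralCover

open Polynomial Finset

variable {k R E ι : Type*} [Field k] [CommRing R] [Algebra k R] [AddCommGroup E] [Module k E]
  [Fintype ι] [DecidableEq ι] {M : E →ₗ[k] R} {β : ι → Module.Dual k E}

theorem lagrangeIdempotent_mul_eq_smul [Infinite k]
    (hrel : ∀ c, ∏ i, (M c - algebraMap k R (β i c)) = 0) {c₀ : E}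
    (hc₀ : Function.Injective fun i => β i c₀) (j : ι) (c : E) :
    lagrangeIdempotent (β · c₀) (M c₀) j * M c =
      β j c • lagrangeIdempotent (β · c₀) (M c₀) j := by
  set e := lagrangeIdempotent (β · c₀) (M c₀) j
  have hpol := sum_mul_prod_erase_eq_zero_of_forall_prod_add_smul_eq_zero
    (u := fun i => M c₀ - algebraMap k R (β i c₀))
    (w := fun i => M c - algebraMap k R (β i c)) fun s : k => by
      convert hrel (c₀ + s • c) using 2 with i
      simp only [map_add, map_smul, smul_eq_mul, Algebra.smul_def, map_mul]
      ring
  have hterm (i : ι) : e * ∏ i' ∈ univ.erase i, (M c₀ - algebraMap k R (β i' c₀)) =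
      (Lagrange.nodal (univ.erase i) (β · c₀)).eval (β j c₀) • e := by
    rw [← Lagrange.aeval_nodal, lagrangeIdempotent_mul_aeval (hrel c₀)]
  have hj : (Lagrange.nodal (univ.erase j) (β · c₀)).eval (β j c₀) ≠ 0 :=
    Lagrange.eval_nodal_not_at_node fun i hi => hc₀.ne (ne_of_mem_erase hi).symm
  have := congrArg (e * ·) hpol
  simp only [mul_sum, mul_left_comm e, hterm, mul_smul_comm, mul_zero] at this
  rw [sum_eq_single j (fun i _ hij => by
      rw [Lagrange.eval_nodal, prod_eq_zero (mem_erase.mpr ⟨hij.symm, mem_univ j⟩) (sub_self _),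
        zero_smul])
    (by simp), smul_eq_zero_iff_right hj, sub_mul, sub_eq_zero] at this
  rw [mul_comm, this, Algebra.smul_def]

omit [DecidableEq ι] in
theorem Module.Dual.exists_apply_injective [Infinite k] (hβ : Function.Injective β) :
    ∃ c₀ : E, Function.Injective fun i => β i c₀ := by
  obtain ⟨c₀, hc₀⟩ := Module.Dual.exists_forall_ne_zero_of_forall_exists
    (fun p : {p : ι × ι // p.1 ≠ p.2} => β p.1.1 - β p.1.2) fun p => by
      by_contra! h
      exact p.2 (hβ (sub_eq_zero.mp (LinearMap.ext h)))
  refine ⟨c₀, fun i j hij => by_contra fun h => hc₀ ⟨(i, j), h⟩ ?_⟩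
  simpa [sub_eq_zero] using hij

theorem AlgHom.bijective_of_forall_prod_sub_algebraMap_eq_zero [Infinite k]
    (hβ : Function.Injective β) (hrel : ∀ c, ∏ i, (M c - algebraMap k R (β i c)) = 0)
    (hgen : Algebra.adjoin k (Set.range M) = ⊤) (Φ : R →ₐ[k] ι → k)
    (hΦ : ∀ c i, Φ (M c) i = β i c) : Function.Bijective Φ := by
  obtain ⟨c₀, hc₀⟩ := Module.Dual.exists_apply_injective hβ
  set e := lagrangeIdempotent (β · c₀) (M c₀)
  have he (j : ι) (r : R) : e j * r = Φ r j • e j := by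
    have hr : r ∈ Algebra.adjoin k (Set.range M) := hgen ▸ Algebra.mem_top
    induction hr using Algebra.adjoin_induction with
    | mem x hx =>
      obtain ⟨c, rfl⟩ := hx
      rw [hΦ, lagrangeIdempotent_mul_eq_smul hrel hc₀]
    | algebraMap r => simp [Algebra.smul_def, mul_comm]
    | add x y _ _ hx hy => rw [mul_add, hx, hy, map_add, Pi.add_apply, add_smul]
    | mul x y _ _ hx hy =>
      rw [← mul_assoc, hx, smul_mul_assoc, hy, smul_smul, map_mul, Pi.mul_apply, mul_comm]
  have hsum : ∑ j, e j = 1 := sum_lagrangeIdempotent hc₀ (hrel c₀)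
  refine ⟨(injective_iff_map_eq_zero Φ).mpr fun r hr => ?_,
    fun g => ⟨∑ m, g m • e m, ?_⟩⟩
  · rw [← mul_one r, ← hsum, mul_sum]
    simp [mul_comm r, he, hr]
  · have hΦe (m j : ι) : Φ (e m) j = (Lagrange.basis univ (β · c₀) m).eval (β j c₀) := by
      rw [← hΦ c₀ j, ← Polynomial.coe_aeval_eq_eval]
      exact (aeval_algHom_apply ((Pi.evalAlgHom k (fun _ => k) j).comp Φ) _ _).symm
    ext j
    simp only [map_sum, map_smul, Finset.sum_apply, Pi.smul_apply, hΦe, smul_eq_mul]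
    refine (sum_eq_single j (fun m _ hmj => mul_eq_zero_of_right _
      (Lagrange.eval_basis_of_ne (v := (β · c₀)) hmj (mem_univ j)))
      (absurd (mem_univ j))).trans ?_
    exact mul_right_eq_self₀.mpr (.inl (Lagrange.eval_basis_self hc₀.injOn (mem_univ j)))

end SpectralCover

section Cayley

variable (k : Type*) [Field k] (n d : ℕ)

noncomputable def cayleyIdeal : Ideal (MvPolynomial ((Fin n × Fin d) ⊕ Fin d) k) :=
  Ideal.span {f | ∃ c : Fin d → k,
    f = ∏ j : Fin n, (∑ l : Fin d, C (c l) * X (Sum.inr l) -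
      ∑ l : Fin d, C (c l) * X (Sum.inl (j, l)))}

noncomputable def cayleyMk : MvPolynomial ((Fin n × Fin d) ⊕ Fin d) k →+* cayleyRing k n d :=
  Ideal.Quotient.mk (cayleyIdeal k n d)

theorem cayleyMk_surjective : Function.Surjective (cayleyMk k n d) :=
  Ideal.Quotient.mk_surjective

theorem cayleyStructMap_eq : cayleyStructMap k n d =
    (cayleyMk k n d).comp ((rename Sum.inl).toRingHom.comp
      (snInvariants k n d).val.toRingHom) := rfl

noncomputable def coordCharpoly (l : Fin d) : Polynomial (MvPolynomial (Fin n × Fin d) k) :=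
  ∏ j : Fin n, (Polynomial.X - Polynomial.C (X (j, l)))

theorem coordCharpoly_monic (l : Fin d) : (coordCharpoly k n d l).Monic :=
  Polynomial.monic_prod_of_monic _ _ fun _ _ => Polynomial.monic_X_sub_C _

theorem coeff_coordCharpoly_mem_snInvariants (l : Fin d) (m : ℕ) :
    (coordCharpoly k n d l).coeff m ∈ snInvariants k n d := fun σ => by
  have hmap : (coordCharpoly k n d l).map (rename (Prod.map σ id)).toRingHom =
      coordCharpoly k n d l := by
    simp only [coordCharpoly, Polynomial.map_prod, Polynomial.map_sub, Polynomial.map_X,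
      Polynomial.map_C, AlgHom.toRingHom_eq_coe, RingHom.coe_coe, rename_X, Prod.map_apply, id_eq]
    exact Equiv.prod_comp σ fun j => Polynomial.X - Polynomial.C (X (j, l))
  simpa using congrArg (Polynomial.coeff · m) hmap

theorem exists_monic_eval₂_cayleyStructMap (l : Fin d) :
    ∃ q : Polynomial (snInvariants k n d), q.Monic ∧
      ∀ z, q.eval₂ (cayleyStructMap k n d) z =
        ∏ j : Fin n, (z - cayleyMk k n d (X (Sum.inl (j, l)))) := by
  obtain ⟨q, hq, -, hq_monic⟩ : ∃ q : Polynomial (snInvariants k n d),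
      q.map (snInvariants k n d).val.toRingHom = coordCharpoly k n d l ∧ _ ∧ q.Monic :=
    Polynomial.lifts_and_natDegree_eq_and_monic
      ((Polynomial.lifts_iff_coeff_lifts _).mpr fun m =>
        ⟨⟨_, coeff_coordCharpoly_mem_snInvariants k n d l m⟩, rfl⟩)
      (coordCharpoly_monic k n d l)
  refine ⟨q, hq_monic, fun z => ?_⟩
  rw [cayleyStructMap_eq, ← RingHom.comp_assoc, ← Polynomial.eval₂_map, hq]
  simp [coordCharpoly, Polynomial.eval₂_finsetProd]

theorem cayleyMk_eq_zero_iff {p : MvPolynomial ((Fin n × Fin d) ⊕ Fin d) k} :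
    cayleyMk k n d p = 0 ↔ p ∈ cayleyIdeal k n d :=
  Ideal.Quotient.eq_zero_iff_mem

theorem isIntegralElem_cayleyMk_X (p : (Fin n × Fin d) ⊕ Fin d) :
    (cayleyStructMap k n d).IsIntegralElem (cayleyMk k n d (X p)) := by
  rcases p with ⟨j, l⟩ | l <;>
    obtain ⟨q, hq, heval⟩ := exists_monic_eval₂_cayleyStructMap k n d l
  · exact ⟨q, hq, by rw [heval]; exact Finset.prod_eq_zero (Finset.mem_univ j) (sub_self _)⟩
  · refine ⟨q, hq, ?_⟩
    have hmem : ∏ j : Fin n, (X (Sum.inr l) - X (Sum.inl (j, l))) ∈ cayleyIdeal k n d :=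
      Ideal.subset_span ⟨Pi.single l 1, by simp [Pi.single_apply]⟩
    simpa [heval, map_prod] using (cayleyMk_eq_zero_iff k n d).mpr hmem

theorem cayleyStructMap_isIntegral : (cayleyStructMap k n d).IsIntegral := fun x => by
  obtain ⟨p, rfl⟩ := cayleyMk_surjective k n d x
  induction p using MvPolynomial.induction_on with
  | C r =>
    have : cayleyMk k n d (C r) = cayleyStructMap k n d (algebraMap k _ r) := by
      simp [cayleyStructMap_eq, MvPolynomial.algebraMap_eq]
    exact this ▸ RingHom.isIntegralElem_map _
  | add p q hp hq => rw [map_add]; exact hp.add _ hq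
  | mul_X p i hp => rw [map_mul]; exact hp.mul _ (isIntegralElem_cayleyMk_X k n d i)

theorem cayleyStructMap_finiteType : (cayleyStructMap k n d).FiniteType := by
  refine RingHom.FiniteType.of_comp_finiteType (f := algebraMap k (snInvariants k n d)) ?_
  have : (cayleyStructMap k n d).comp (algebraMap k _) =
      (cayleyMk k n d).comp (algebraMap k (MvPolynomial _ k)) := by
    ext r
    simp [cayleyStructMap_eq, MvPolynomial.algebraMap_eq]
  rw [this]
  exact RingHom.FiniteType.comp_surjective (RingHom.finiteType_algebraMap.mpr inferInstance)
    (cayleyMk_surjective k n d)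

theorem cayleyStructMap_finite : (cayleyStructMap k n d).Finite :=
  (cayleyStructMap_isIntegral k n d).to_finite (cayleyStructMap_finiteType k n d)

end Cayley

section Fiber

variable {k : Type*} [Field k] {n d : ℕ} (v : Fin n → Fin d → k)

noncomputable def fiberIdeal : Ideal (MvPolynomial (Fin d) k) :=
  Ideal.span {f | ∃ c : Fin d → k,
    f = ∏ j : Fin n, (∑ l : Fin d, C (c l) * X l - C (∑ l : Fin d, c l * v j l))}

theorem fiberIdeal_le_ker_eval :
    fiberIdeal v ≤ RingHom.ker (AlgHom.pi fun j => aeval (v j) :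
      MvPolynomial (Fin d) k →ₐ[k] Fin n → k) := by
  refine Ideal.span_le.mpr ?_
  rintro _ ⟨c, rfl⟩
  ext j
  simpa [Finset.prod_eq_zero_iff] using ⟨j, sub_self _⟩

noncomputable def fiberEval : (MvPolynomial (Fin d) k ⧸ fiberIdeal v) →ₐ[k] Fin n → k :=
  Ideal.Quotient.liftₐ _ _ fun _ ha => fiberIdeal_le_ker_eval v ha

theorem fiberEval_mk (p : MvPolynomial (Fin d) k) (j : Fin n) :
    fiberEval v (Ideal.Quotient.mk _ p) j = aeval (v j) p :=
  congrFun (AlgHom.congr_fun (Ideal.Quotient.liftₐ_comp (fiberIdeal v)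
    (AlgHom.pi fun j => aeval (v j)) fun _ ha => fiberIdeal_le_ker_eval v ha) p) j

theorem bijective_fiberEval [Infinite k] (hv : Function.Injective v) :
    Function.Bijective (fiberEval v) := by
  let M : (Fin d → k) →ₗ[k] MvPolynomial (Fin d) k ⧸ fiberIdeal v :=
    Fintype.linearCombination k fun l => Ideal.Quotient.mk _ (X l)
  let β (j : Fin n) : Module.Dual k (Fin d → k) := Fintype.linearCombination k (v j)
  have hβ : Function.Injective β := fun i j h =>
    hv (funext fun l => by simpa [β] using LinearMap.congr_fun h (Pi.single l 1))
  have hrel (c : Fin d → k) : ∏ j, (M c - algebraMap k _ (β j c)) = 0 := by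
    have : ∏ j, (M c - algebraMap k _ (β j c)) = Ideal.Quotient.mkₐ k (fiberIdeal v)
        (∏ j : Fin n, (∑ l : Fin d, C (c l) * X l - C (∑ l : Fin d, c l * v j l))) := by
      simp only [C_mul', map_prod, map_sub]
      simp only [← algebraMap_eq, AlgHom.commutes]
      simp [M, β, Fintype.linearCombination_apply]
    rw [this, Ideal.Quotient.mkₐ_eq_mk, Ideal.Quotient.eq_zero_iff_mem]
    exact Ideal.subset_span ⟨c, rfl⟩
  have hgen : Algebra.adjoin k (Set.range M) = ⊤ := by
    have : Algebra.adjoin k (Ideal.Quotient.mkₐ k (fiberIdeal v) '' Set.range X) = ⊤ := by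
      rw [Algebra.adjoin_image, adjoin_range_X, Algebra.map_top, AlgHom.range_eq_top]
      exact Ideal.Quotient.mkₐ_surjective k _
    refine top_unique (this ▸ Algebra.adjoin_mono ?_)
    rintro _ ⟨_, ⟨l, rfl⟩, rfl⟩
    exact ⟨Pi.single l 1, by simp [M]⟩
  refine (fiberEval v).bijective_of_forall_prod_sub_algebraMap_eq_zero hβ hrel hgen fun c j => ?_
  simp [M, β, Fintype.linearCombination_apply, fiberEval_mk]

end Fiber

theorem stmt_12_general (k : Type*) [Field k] [IsAlgClosed k] (n d : ℕ) :
    (cayleyStructMap k n d).Finite ∧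
    ∀ v : Fin n → Fin d → k, Function.Injective v →
      Nonempty ((MvPolynomial (Fin d) k ⧸
        Ideal.span {f : MvPolynomial (Fin d) k | ∃ c : Fin d → k,
          f = ∏ j : Fin n,
            (∑ l : Fin d, C (c l) * X l - C (∑ l : Fin d, c l * v j l))})
        ≃ₐ[k] (Fin n → k)) :=
  ⟨cayleyStructMap_finite k n d,
    fun v hv => ⟨AlgEquiv.ofBijective _ (bijective_fiberEval v hv)⟩⟩

/-- The projection `p_n(V) : Cayley_n(V) → Chow_n(V)` is a finite morphism, and it is
finite étale of degree `n` over the multiplicity-free locus `Chow'_n(V)`: the first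
conjunct says the coordinate ring of the universal spectral cover is module-finite
over that of `Chow_n(V)`; the second says that the fiber over any multiplicity-free
0-cycle `[v₁, …, v_n]` (the `vⱼ` pairwise distinct) is `n` reduced points,
i.e. its coordinate ring is isomorphic to `k^n` as a `k`-algebra. -/
theorem stmt_12 (k : Type*) [Field k] [IsAlgClosed k] [CharZero k] (n d : ℕ) :
    (cayleyStructMap k n d).Finite ∧
    ∀ v : Fin n → Fin d → k, Function.Injective v →
      Nonempty ((MvPolynomial (Fin d) k ⧸
        Ideal.span {f : MvPolynomial (Fin d) k | ∃ c : Fin d → k,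
          f = ∏ j : Fin n,
            (∑ l : Fin d, C (c l) * X l - C (∑ l : Fin d, c l * v j l))})
        ≃ₐ[k] (Fin n → k)) :=
  stmt_12_general k n d
end
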